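/- arXiv:2501.13229 — 7 statements merged into one kernel-verified Lean document; each statement's English description precedes it below -/
import Mathlib

section
/- Let B be a category and F : B ⥤ Cat a functor such that for every object b of B the category F(b) has a terminal object. Then the forgetful functor forget : Grothendieck F ⥤ B admits a right adjoint s which is a strict section (s ⋙ forget = 𝟭 B) and such that for every b the fiber component of s(b) is a terminal object of F(b). (Equivalently, in the dual formulation of the paper: a Grothendieck fibration whose fibers all have initial objects admits a fiberwise-initial section which is left adjoint to the projection.) -/
open CategoryTheory CategoryTheory.Limits

universe v u v₂ u₂

/-- If `F : B ⥤ Cat` is such that every fiber `F.obj b` has a terminal object, then the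
projection `forget : Grothendieck F ⥤ B` admits a right adjoint `s` which is a strict
section (`s ⋙ forget = 𝟭 B`) and which is fiberwise terminal: for every `b`, the fiber
component of `s.obj b` is a terminal object of its fiber category. -/
theorem grothendieck_forget_right_adjoint_of_fiberwise_terminal
    {B : Type u} [Category.{v} B] (F : B ⥤ Cat.{v₂, u₂})
    (h : ∀ b : B, HasTerminal (F.obj b)) :
    ∃ s : B ⥤ Grothendieck F,
      Nonempty (Grothendieck.forget F ⊣ s) ∧
      s ⋙ Grothendieck.forget F = 𝟭 B ∧
      ∀ b : B, Nonempty (IsTerminal (s.obj b).fiber) := by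
  haveI := h
  refine ⟨{ obj := fun b => ⟨b, ⊤_ (F.obj b)⟩
            map := fun {a b} g => ⟨g, terminal.from _⟩
            map_id := fun b => Grothendieck.ext _ _ rfl (terminal.hom_ext _ _)
            map_comp := fun f g => Grothendieck.ext _ _ rfl (terminal.hom_ext _ _) },
    ⟨Adjunction.mkOfHomEquiv
      { homEquiv := fun X b =>
          { toFun := fun g => ⟨g, terminal.from _⟩
            invFun := fun f => f.base
            left_inv := fun g => rfl
            right_inv := fun f => Grothendieck.ext _ _ rfl (terminal.hom_ext _ _) }
        homEquiv_naturality_left_symm := fun f g => rfl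
        homEquiv_naturality_right := fun f g => Grothendieck.ext _ _ rfl (terminal.hom_ext _ _) }⟩,
    rfl,
    fun b => ⟨terminalIsTerminal⟩⟩
end

section
/- Let u : A ⥤ B be a functor between small categories and F : A ⥤ Type. For every object b of B there is a bijection, natural in b, between the value (Lan_u F)(b) of the left Kan extension of F along u at b and the set π₀ of connected components of the costructured-arrow category ((π_F ⋙ u) ↓ b), whose objects are triples (a, x, g) with a an object of A, x ∈ F(a), and g : u(a) ⟶ b. (Push–pull formula for left Kan extension of Type-valued functors.) -/
/-!
The functor `b ↦ π₀ ((π_F ⋙ u) ↓ b)` is itself a left Kan extension of `F` along `u`, with unit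
sending `x ∈ F a` to the component of `((a, x), 𝟙 (u a))`. A transformation `β : F ⟶ u ⋙ G`
descends to it by sending the component of `((a, x), g)` to `G g (β x)`, which is constant on
components by naturality of `β`; uniqueness holds because that component is the image of the
unit component of `(a, x)` under `g`. Uniqueness of Kan extensions then identifies it with
`Lan_u F`.
-/

open CategoryTheory

universe u

namespace CategoryTheory

theorem Zigzag.eq_of_forall_hom {J : Type*} [Category J] {α : Sort*} (φ : J → α)
    (hφ : ∀ ⦃j j' : J⦄, (j ⟶ j') → φ j = φ j') {j j' : J} (h : Zigzag j j') : φ j = φ j' := by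
  induction h with
  | refl => rfl
  | tail _ hzag ih =>
    rcases hzag with ⟨⟨f⟩⟩ | ⟨⟨f⟩⟩
    · exact ih.trans (hφ f)
    · exact ih.trans (hφ f).symm

def ConnectedComponents.lift {J : Type*} [Category J] {α : Sort*} (φ : J → α)
    (hφ : ∀ ⦃j j' : J⦄, (j ⟶ j') → φ j = φ j') : ConnectedComponents J → α :=
  _root_.Quotient.lift φ fun _ _ ↦ Zigzag.eq_of_forall_hom φ hφ

section

variable {X : Type u} [Category X] {B : Type*} [Category.{u} B]

def CostructuredArrow.componentsFunctor (G : X ⥤ B) : B ⥤ Type u where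
  obj b := ConnectedComponents (CostructuredArrow G b)
  map g := ↾(CostructuredArrow.map g).mapConnectedComponents
  map_id b := by
    ext ⟨j⟩
    exact congrArg ConnectedComponents.mk CostructuredArrow.map_id
  map_comp g g' := by
    ext ⟨j⟩
    exact congrArg ConnectedComponents.mk CostructuredArrow.map_comp

end

section

variable {A : Type u} [Category A] {B : Type*} [Category.{u} B] (L : A ⥤ B) (F : A ⥤ Type u)

abbrev lanComponents : B ⥤ Type u :=
  CostructuredArrow.componentsFunctor (CategoryOfElements.π F ⋙ L)

noncomputable def lanComponentsUnit : F ⟶ L ⋙ lanComponents L F where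
  app a := ↾fun x ↦ ConnectedComponents.mk
    (CostructuredArrow.mk (Y := F.elementsMk a x) (𝟙 (L.obj a)))
  naturality a a' f := by
    ext x
    refine (Quot.sound (Zigzag.of_hom (CostructuredArrow.homMk
      (CategoryOfElements.homMk (F.elementsMk a x) (F.elementsMk a' (F.map f x)) f rfl) ?_))).symm
    exact (Category.comp_id _).trans (Category.id_comp _).symm

variable {L F}

noncomputable def lanComponentsDesc (G : B ⥤ Type u) (β : F ⟶ L ⋙ G) :
    lanComponents L F ⟶ G where
  app b := ↾(ConnectedComponents.lift
    (fun j : CostructuredArrow (CategoryOfElements.π F ⋙ L) b ↦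
      G.map j.hom (β.app j.left.1 j.left.2))
    fun j j' f ↦ by
      have hw : L.map f.left.1 ≫ j'.hom = j.hom := CostructuredArrow.w f
      have hβ := NatTrans.naturality_apply β f.left.1 j.left.2
      rw [← hw]
      erw [G.map_comp_apply, ← hβ, f.left.2]
      rfl)
  naturality b b' g := by
    ext ⟨j⟩
    exact G.map_comp_apply j.hom g (β.app j.left.1 j.left.2)

theorem lanComponentsDesc_fac (G : B ⥤ Type u) (β : F ⟶ L ⋙ G) :
    lanComponentsUnit L F ≫ Functor.whiskerLeft L (lanComponentsDesc G β) = β := by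
  ext a x
  exact G.map_id_apply _ (β.app a x)

theorem connectedComponentsMk_eq_map_lanComponentsUnit {a : A} (x : F.obj a) {b : B}
    (g : L.obj a ⟶ b) :
    ConnectedComponents.mk (CostructuredArrow.mk (Y := F.elementsMk a x) g) =
      (lanComponents L F).map g ((lanComponentsUnit L F).app a x) := by
  refine Quot.sound (Zigzag.of_inv (CostructuredArrow.homMk (𝟙 (F.elementsMk a x)) ?_))
  erw [Functor.map_id]
  rfl

theorem lanComponents_hom_ext {G : B ⥤ Type u} {γ₁ γ₂ : lanComponents L F ⟶ G}
    (h : lanComponentsUnit L F ≫ Functor.whiskerLeft L γ₁ =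
      lanComponentsUnit L F ≫ Functor.whiskerLeft L γ₂) : γ₁ = γ₂ := by
  ext b ⟨⟨⟨a, x⟩, ⟨⟨⟩⟩, g⟩⟩
  have hγ (γ : lanComponents L F ⟶ G) :
      γ.app b (ConnectedComponents.mk (CostructuredArrow.mk (Y := F.elementsMk a x) g)) =
        G.map g (γ.app (L.obj a) ((lanComponentsUnit L F).app a x)) :=
    (congrArg (γ.app b) (connectedComponentsMk_eq_map_lanComponentsUnit x g)).trans
      (NatTrans.naturality_apply γ g _)
  exact (hγ γ₁).trans
    ((congrArg (G.map g) (types_congr_hom (congr_app h a) x)).trans (hγ γ₂).symm)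

noncomputable def lanComponentsIsUniversal :
    (Functor.LeftExtension.mk (lanComponents L F) (lanComponentsUnit L F)).IsUniversal :=
  Limits.IsInitial.ofUniqueHom
    (fun E ↦ StructuredArrow.homMk (lanComponentsDesc E.right E.hom)
      (lanComponentsDesc_fac E.right E.hom))
    (fun E m ↦ StructuredArrow.ext _ _ (lanComponents_hom_ext
      ((StructuredArrow.w m).trans (lanComponentsDesc_fac E.right E.hom).symm)))

instance : (lanComponents L F).IsLeftKanExtension (lanComponentsUnit L F) :=
  ⟨⟨lanComponentsIsUniversal⟩⟩

end
end CategoryTheory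

/-- **Push–pull formula for left Kan extensions of `Type`-valued functors.**
For `u : A ⥤ B` and `F : A ⥤ Type u`, the value of the left Kan extension `Lan_u F` at
`b : B` is in bijection, naturally in `b`, with the set of connected components of the
costructured-arrow category `((π_F ⋙ u) ↓ b)`, whose objects are triples `(a, x, g)`
with `a : A`, `x ∈ F a` and `g : u a ⟶ b`. -/
theorem lan_obj_equiv_pi0_costructuredArrow {A B : Type u} [SmallCategory A]
    [SmallCategory B] (u : A ⥤ B) (F : A ⥤ Type u) :
    ∃ e : ∀ b : B, (u.lan.obj F).obj b ≃
        ConnectedComponents (CostructuredArrow (CategoryOfElements.π F ⋙ u) b),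
      ∀ ⦃b b' : B⦄ (g : b ⟶ b') (x : (u.lan.obj F).obj b),
        e b' ((u.lan.obj F).map g x) =
          (CostructuredArrow.map g).mapConnectedComponents (e b x) := by
  let i : u.lan.obj F ≅ lanComponents u F :=
    Functor.leftKanExtensionUnique _ (u.lanUnit.app F) _ (lanComponentsUnit u F)
  exact ⟨fun b ↦ (i.app b).toEquiv, fun b b' g x ↦ NatTrans.naturality_apply i.hom g x⟩
end

section
/- Let C be a small category and L : C ⥤ D a localization of C at the class of all its morphisms. Then L is both an initial functor and a final functor. -/
/-!
If precomposition with `F : C ⥤ D` is full on functors to types, then `F` is final: sending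
`g : d ⟶ F c` to its connected component in `d/F` is a natural transformation
`F ⋙ coyoneda d ⟶ F ⋙ const π₀(d/F)`, hence it is `F ⋙ σ` for some
`σ : coyoneda d ⟶ const π₀(d/F)`, and naturality of `σ` forces every component to be
`σ_d (𝟙 d)` (which also shows that `d/F` is nonempty). Precomposition with a localization functor
is fully faithful, and the opposite of a localization functor is again one.
-/

open CategoryTheory

universe u v w u₁ v₁ u₂ v₂

namespace CategoryTheory.Functor

open Opposite

variable {C : Type u₁} [Category.{v₁} C] {D : Type u₂} [Category.{v₂} D]

def toConnectedComponentsStructuredArrow (F : C ⥤ D) (d : D) :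
    F ⋙ coyoneda.obj (op d) ⋙ uliftFunctor.{u₁} ⟶
      F ⋙ (const D).obj (ConnectedComponents (StructuredArrow d F)) where
  app c := TypeCat.ofHom fun g => _root_.Quotient.mk'' (StructuredArrow.mk g.down)
  naturality c c' f := by
    ext g
    exact (_root_.Quotient.sound (Zigzag.of_hom (StructuredArrow.homMk f rfl))).symm

theorem final_of_full_whiskeringLeft (F : C ⥤ D)
    [((whiskeringLeft C D (Type max u₁ v₂)).obj F).Full] : F.Final where
  out d := by
    let τ := toConnectedComponentsStructuredArrow F d
    let σ := ((whiskeringLeft C D (Type max u₁ v₂)).obj F).preimage τ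
    have hσ : whiskerLeft F σ = τ := map_preimage ((whiskeringLeft C D _).obj F) τ
    have component_eq (j : StructuredArrow d F) :
        _root_.Quotient.mk'' j = σ.app d (ULift.up (𝟙 d)) := by
      have hτ : σ.app (F.obj j.right) (ULift.up j.hom) = _root_.Quotient.mk'' j :=
        types_congr_hom (congr_app hσ j.right) (ULift.up j.hom)
      have hnat :
          σ.app (F.obj j.right) (ULift.up (𝟙 d ≫ j.hom)) = σ.app d (ULift.up (𝟙 d)) :=
        types_congr_hom (σ.naturality j.hom) (ULift.up (𝟙 d))
      rw [← hτ, ← hnat, Category.id_comp]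
    have : Nonempty (StructuredArrow d F) := (σ.app d (ULift.up (𝟙 d))).exists_rep.nonempty
    exact zigzag_isConnected fun j₁ j₂ =>
      _root_.Quotient.exact ((component_eq j₁).trans (component_eq j₂).symm)

theorem final_of_isLocalization (L : C ⥤ D) (W : MorphismProperty C) [L.IsLocalization W] :
    L.Final :=
  have := Localization.full_whiskeringLeft L W (Type max u₁ v₂)
  final_of_full_whiskeringLeft L

theorem initial_of_isLocalization (L : C ⥤ D) (W : MorphismProperty C) [L.IsLocalization W] :
    L.Initial :=
  have := final_of_isLocalization L.op W.op
  initial_of_final_op L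

end CategoryTheory.Functor

/-- If `L : C ⥤ D` is a localization of a small category `C` at the class of all of its
morphisms, then `L` is both an initial functor and a final functor. -/
theorem initial_and_final_of_isLocalization_top {C : Type u} [SmallCategory C]
    {D : Type v} [Category.{w} D] (L : C ⥤ D)
    [L.IsLocalization (⊤ : MorphismProperty C)] :
    L.Initial ∧ L.Final :=
  ⟨L.initial_of_isLocalization ⊤, L.final_of_isLocalization ⊤⟩
end

section
/- Let B be a small category, F : B ⥤ Cat a functor with small values, E a cocomplete category, and X : Grothendieck F ⥤ E a functor. Then for every object b of B, the value at b of the left Kan extension of X along the projection forget : Grothendieck F ⥤ B is naturally isomorphic to the colimit of the restriction of X to the fiber over b, i.e. (Lan_{forget F} X)(b) ≅ colim (ι F b ⋙ X). (Left Kan extensions along Grothendieck opfibrations are computed fiberwise.) -/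
/-!
The pointwise formula computes `(Lan_forget X)(b)` as the colimit of `X` over the comma category
`forget ↓ b`, whose objects are pairs `(a ∈ F(b'), t : b' ⟶ b)`. The fiber `F(b)` sits in it as
the pairs with `t = 𝟙 b`, and this inclusion has a left adjoint transporting `a` along `t` to
`F(t)(a) ∈ F(b)` (this is where the opfibration structure of `forget` enters). A right adjoint is
final, so the colimit over `forget ↓ b` is the colimit over the fiber.
-/

open CategoryTheory CategoryTheory.Limits

universe u v w

namespace CategoryTheory.Grothendieck

variable {C : Type*} [Category C] {F : C ⥤ Cat}

lemma mk_comp_ι_map {X : Grothendieck F} {c : C} (t : X.base ⟶ c) {x y : F.obj c}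
    (u : (F.map t).toFunctor.obj X.fiber ⟶ x) (f : x ⟶ y) :
    (⟨t, u ≫ f⟩ : X ⟶ ⟨c, y⟩) = (⟨t, u⟩ : X ⟶ (ι F c).obj x) ≫ (ι F c).map f := by
  refine Grothendieck.ext _ _ (Category.comp_id t).symm ?_
  -- `(ι F c).map f` has base `𝟙 c` only after unfolding, which `simp` will not do under the
  -- dependent `fiber`; hence the `show`, and the final merge of `eqToHom`s up to defeq.
  show _ = eqToHom _ ≫ (F.map (𝟙 c)).toFunctor.map u ≫ eqToHom _ ≫ f
  rw [Functor.congr_hom (congrArg Cat.Hom.toFunctor (F.map_id c)) u]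
  simp only [comp_base, Cat.Hom.id_toFunctor, Functor.id_obj, Functor.id_map, Category.assoc,
    eqToHom_trans_assoc, eqToHom_refl, Category.id_comp]
  exact (eqToHom_trans_assoc _ _ _).symm

variable (F) (c : C)

abbrev ιCostructuredArrow : F.obj c ⥤ CostructuredArrow (forget F) c :=
  (ι F c).toCostructuredArrow (forget F) c (fun _ => 𝟙 c) (fun _ => Category.comp_id _)

variable {F c}

lemma base_eq_hom_of_hom_ιCostructuredArrow {d : CostructuredArrow (forget F) c} {x : F.obj c}
    (v : d ⟶ (ιCostructuredArrow F c).obj x) : v.left.base = d.hom :=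
  (Category.comp_id _).symm.trans (CostructuredArrow.w v)

variable (F c)

def ιCostructuredArrowHomEquiv (d : CostructuredArrow (forget F) c) (x : F.obj c) :
    ((F.map d.hom).toFunctor.obj d.left.fiber ⟶ x) ≃ (d ⟶ (ιCostructuredArrow F c).obj x) where
  toFun u := CostructuredArrow.homMk ⟨d.hom, u⟩ (Category.comp_id _)
  invFun v := eqToHom (congrArg (fun g => (F.map g).toFunctor.obj d.left.fiber)
    (base_eq_hom_of_hom_ιCostructuredArrow v).symm) ≫ v.left.fiber
  left_inv u := Category.id_comp u
  right_inv v := CostructuredArrow.hom_ext _ _ <| Grothendieck.ext _ _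
    (base_eq_hom_of_hom_ιCostructuredArrow v).symm
    ((eqToHom_trans_assoc _ _ _).trans (Category.id_comp _))

lemma ιCostructuredArrowHomEquiv_comp (d : CostructuredArrow (forget F) c) (x y : F.obj c)
    (f : x ⟶ y) (u : (F.map d.hom).toFunctor.obj d.left.fiber ⟶ x) :
    ιCostructuredArrowHomEquiv F c d y (u ≫ f) =
      ιCostructuredArrowHomEquiv F c d x u ≫ (ιCostructuredArrow F c).map f :=
  CostructuredArrow.hom_ext _ _ (mk_comp_ι_map d.hom u f)

instance final_ιCostructuredArrow : (ιCostructuredArrow F c).Final :=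
  Functor.final_of_adjunction
    (Adjunction.adjunctionOfEquivLeft _ (ιCostructuredArrowHomEquiv_comp F c))

end CategoryTheory.Grothendieck

/-- **Left Kan extensions along Grothendieck opfibrations are computed fiberwise.**
For `F : B ⥤ Cat` with small values, a cocomplete category `E` and
`X : Grothendieck F ⥤ E`, the value at `b : B` of the left Kan extension of `X` along
the projection `forget : Grothendieck F ⥤ B` is isomorphic to the colimit of the
restriction of `X` to the fiber over `b`. -/
theorem lan_grothendieck_forget_obj_iso_colimit_fiber {B : Type u} [SmallCategory B]
    (F : B ⥤ Cat.{u, u}) {E : Type v} [Category.{w} E] [HasColimitsOfSize.{u, u} E]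
    (X : Grothendieck F ⥤ E) (b : B) :
    Nonempty (((Grothendieck.forget F).lan.obj X).obj b ≅
      colimit (Grothendieck.ι F b ⋙ X)) :=
  ⟨(Grothendieck.forget F).leftKanExtensionObjIsoColimit X b ≪≫
    (Functor.Final.colimitIso (Grothendieck.ιCostructuredArrow F b) _).symm⟩
end

section
/- Let B and A be small categories, F : B ⥤ Cat a functor with small values, u : A ⥤ B a functor, E a cocomplete category, and X : Grothendieck F ⥤ E a functor. Then the Beck–Chevalley comparison is an isomorphism: there is a natural isomorphism of functors A ⥤ E between Lan_{forget (u ⋙ F)} ((pre F u) ⋙ X) and u ⋙ Lan_{forget F} X. (Base change for left Kan extensions along Grothendieck opfibrations.) -/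
/-!
Both sides are pointwise Kan extensions, so at `a : A` they are colimits over
`CostructuredArrow (forget (u ⋙ F)) a` and `CostructuredArrow (forget F) (u a)`; it suffices that
the comparison functor between these categories is final. Precomposed with the inclusion of the
fiber `F (u a)` it becomes the inclusion of that fiber into `CostructuredArrow (forget F) (u a)`,
and fiber inclusions are final: an object `(x, t : x.base ⟶ c)` maps to the fiber over `c` by the
transport `x ⟶ (c, F t x)`, and every other map from it to that fiber factors through this one.
-/

open CategoryTheory CategoryTheory.Limits

universe u v w

namespace CategoryTheory.Functor

variable {A B C D H : Type*} [Category* A] [Category* B] [Category* C] [Category* D] [Category* H]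
  {p : A ⥤ C} {L' : A ⥤ B} {L : C ⥤ D} {v : B ⥤ D} (α : p ⋙ L ⟶ L' ⋙ v)

noncomputable def LeftExtension.IsPointwiseLeftKanExtension.baseChange
    [∀ b, (CostructuredArrow.map₂ α (𝟙 (v.obj b))).Final]
    {X : C ⥤ H} {G : D ⥤ H} {η : X ⟶ L ⋙ G}
    (hG : (LeftExtension.mk G η).IsPointwiseLeftKanExtension) :
    LeftExtension.IsPointwiseLeftKanExtension
      (LeftExtension.mk (v ⋙ G) (whiskerLeft p η ≫ whiskerRight α G : p ⋙ X ⟶ L' ⋙ v ⋙ G)) :=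
  fun b => ((Final.isColimitWhiskerEquiv (CostructuredArrow.map₂ α (𝟙 (v.obj b))) _).symm
    (hG (v.obj b))).ofIsoColimit (Cocone.ext (Iso.refl _) fun j => by
      simp [LeftExtension.mk]
      exact (Category.comp_id _).trans (Category.assoc _ _ _).symm)

noncomputable def leftKanExtensionIsoOfFinal
    [∀ b, (CostructuredArrow.map₂ α (𝟙 (v.obj b))).Final]
    (X : C ⥤ H) [L.HasPointwiseLeftKanExtension X] [L'.HasLeftKanExtension (p ⋙ X)] :
    L'.leftKanExtension (p ⋙ X) ≅ v ⋙ L.leftKanExtension X :=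
  have : (v ⋙ L.leftKanExtension X).IsLeftKanExtension
      (whiskerLeft p (L.leftKanExtensionUnit X) ≫ whiskerRight α _) :=
    ((isPointwiseLeftKanExtensionLeftKanExtensionUnit L X).baseChange α).isLeftKanExtension
  leftKanExtensionUnique _ (L'.leftKanExtensionUnit (p ⋙ X)) _
    (whiskerLeft p (L.leftKanExtensionUnit X) ≫ whiskerRight α _)

end CategoryTheory.Functor

namespace CategoryTheory

lemma isConnected_of_forall_nonempty_hom {J : Type*} [Category* J] (j₀ : J)
    (h : ∀ j, Nonempty (j₀ ⟶ j)) : IsConnected J :=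
  have : Nonempty J := ⟨j₀⟩
  zigzag_isConnected fun j₁ j₂ => Zigzag.of_inv_hom (h j₁).some (h j₂).some

namespace Grothendieck

universe v₁ u₁ v₂ u₂ v₃ u₃
variable {C : Type u₁} [Category.{v₁} C] (F : C ⥤ Cat.{v₃, u₃})

lemma transport_comp_vertical_eq {x : Grothendieck F} {c : C} {y : F.obj c}
    (f : x ⟶ ⟨c, y⟩) {t : x.base ⟶ c} (h : f.base = t) :
    (⟨t, 𝟙 _⟩ : x ⟶ ⟨c, (F.map t).toFunctor.obj x.fiber⟩) ≫
      (⟨𝟙 c, eqToHom (by simp) ≫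
        eqToHom (congrArg (fun t => (F.map t).toFunctor.obj x.fiber) h.symm) ≫ f.fiber⟩ :
        (⟨c, (F.map t).toFunctor.obj x.fiber⟩ : Grothendieck F) ⟶ ⟨c, y⟩) = f := by
  subst h
  refine Grothendieck.ext _ _ (by simp) ?_
  simp
  -- the intermediate objects agree only after unfolding `Grothendieck.comp`
  erw [eqToHom_trans_assoc, eqToHom_trans_assoc, eqToHom_refl, Category.id_comp]

def ιToCostructuredArrow (c : C) : F.obj c ⥤ CostructuredArrow (forget F) c :=
  (ι F c).toCostructuredArrow (forget F) c (fun _ => 𝟙 c) fun _ => Category.id_comp (𝟙 c)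

instance final_ιToCostructuredArrow (c : C) : (ιToCostructuredArrow F c).Final where
  out d := by
    let j₀ : StructuredArrow d (ιToCostructuredArrow F c) :=
      StructuredArrow.mk (Y := (F.map d.hom).toFunctor.obj d.left.fiber)
        (CostructuredArrow.homMk ⟨d.hom, 𝟙 _⟩ (Category.comp_id d.hom))
    refine isConnected_of_forall_nonempty_hom j₀ fun j => ?_
    have hbase : j.hom.left.base = d.hom :=
      (Category.comp_id _).symm.trans (CostructuredArrow.w j.hom)
    refine ⟨StructuredArrow.homMk
      (eqToHom (congrArg (fun t => (F.map t).toFunctor.obj d.left.fiber) hbase.symm) ≫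
        j.hom.left.fiber) ?_⟩
    apply CostructuredArrow.hom_ext
    exact transport_comp_vertical_eq F j.hom.left hbase

variable {D : Type u₂} [Category.{v₂} D] (G : D ⥤ C)

lemma pre_map_ι_map (d : D) {x y : F.obj (G.obj d)} (f : x ⟶ y) :
    (pre F G).map ((ι (G ⋙ F) d).map f) = (ι F (G.obj d)).map f := by
  dsimp [pre, ι]
  exact Grothendieck.ext _ _ (G.map_id d) (by simp)

abbrev preCostructuredArrow (d : D) :
    CostructuredArrow (forget (G ⋙ F)) d ⥤ CostructuredArrow (forget F) (G.obj d) :=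
  CostructuredArrow.map₂ (F := pre F G) (G := G) (𝟙 _) (𝟙 (G.obj d))

def ιToCostructuredArrowCompPreCostructuredArrowIso (d : D) :
    ιToCostructuredArrow (G ⋙ F) d ⋙ preCostructuredArrow F G d ≅
      ιToCostructuredArrow F (G.obj d) :=
  NatIso.ofComponents
    (fun x => CostructuredArrow.isoMk (Iso.refl _)
      (show 𝟙 (G.obj d) ≫ 𝟙 (G.obj d) = 𝟙 (G.obj d) ≫ G.map (𝟙 d) ≫ 𝟙 (G.obj d) by
        simp))
    (fun f => CostructuredArrow.hom_ext _ _
      ((Category.comp_id _).trans ((pre_map_ι_map F G d f).trans (Category.id_comp _).symm)))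

instance final_preCostructuredArrow (d : D) : (preCostructuredArrow F G d).Final :=
  have := Functor.final_of_natIso (ιToCostructuredArrowCompPreCostructuredArrowIso F G d).symm
  Functor.final_of_final_comp (ιToCostructuredArrow (G ⋙ F) d) _

end Grothendieck

end CategoryTheory

/-- **Base change (Beck–Chevalley) for left Kan extensions along Grothendieck
opfibrations.** For small categories `A`, `B`, a functor `F : B ⥤ Cat` with small
values, `u : A ⥤ B`, a cocomplete category `E` and `X : Grothendieck F ⥤ E`, the
left Kan extension of `(pre F u) ⋙ X` along `forget : Grothendieck (u ⋙ F) ⥤ A` is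
naturally isomorphic to `u ⋙ Lan_{forget F} X`. -/
theorem beck_chevalley_lan_grothendieck {A B : Type u} [SmallCategory A]
    [SmallCategory B] (F : B ⥤ Cat.{u, u}) (u : A ⥤ B)
    {E : Type v} [Category.{w} E] [HasColimitsOfSize.{u, u} E]
    (X : Grothendieck F ⥤ E) :
    Nonempty ((Grothendieck.forget (u ⋙ F)).lan.obj (Grothendieck.pre F u ⋙ X) ≅
      u ⋙ (Grothendieck.forget F).lan.obj X) :=
  ⟨Functor.leftKanExtensionIsoOfFinal (p := Grothendieck.pre F u)
    (L' := Grothendieck.forget (u ⋙ F)) (L := Grothendieck.forget F) (v := u) (𝟙 _) X⟩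
end

section
/- Let f : C ⥤ D be a functor between small categories. Then f is initial if and only if f is uniquely left orthogonal to every discrete opfibration: for every discrete opfibration π : X ⥤ Y and every pair of functors φ : C ⥤ X and ψ : D ⥤ Y with φ ⋙ π = f ⋙ ψ (strict equality of functors), there exists a unique functor h : D ⥤ X with f ⋙ h = φ and h ⋙ π = ψ. -/
open CategoryTheory

universe u

/-- A functor `π : X ⥤ Y` is a discrete opfibration if for every object `x` of `X` and
every morphism `g : π x ⟶ y` of `Y` there is a unique morphism of `X` with domain `x`
lying over `g` (in particular, its codomain lies over `y`). -/
def IsDiscreteOpfibration {X : Type*} {Y : Type*} [Category X] [Category Y]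
    (π : X ⥤ Y) : Prop :=
  ∀ ⦃x : X⦄ ⦃y : Y⦄ (g : π.obj x ⟶ y),
    ∃! p : Σ x' : X, (x ⟶ x'),
      (⟨π.obj p.1, π.map p.2⟩ : Σ y' : Y, (π.obj x ⟶ y')) = ⟨y, g⟩

/-!
A functor `h : D ⥤ X` over `ψ : D ⥤ Y` along a discrete opfibration `π` is the same thing as
a section of `ψ ⋙ π.fiberFunctor`, where `fiberFunctor` sends `y` to the set of objects over `y`
and acts on morphisms by unique lifting; and `f ⋙ h = φ` says that this section restricts along
`f` to the section given by `φ`. So unique lifting against discrete opfibrations is bijectivity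
of restriction of sections along `f`, which holds when `f` is initial.

Conversely, lift against the category of elements of `d ↦ π₀ (f ↓ d)`: surjectivity of
restriction extends `c ↦ [𝟙 (f c)]` to a section `s`, and then every `g : f c ⟶ d` lies in the
component `s d`, so each `f ↓ d` is nonempty and connected.
-/

universe w u₁ u₂ u₃ u₄ v₁ v₂ v₃ v₄

lemma CategoryTheory.Functor.ext_of_comp_faithful {D : Type u₁} {X : Type u₂} {Y : Type u₃}
    [Category.{v₁} D] [Category.{v₂} X] [Category.{v₃} Y] {π : X ⥤ Y} [π.Faithful]
    {k₁ k₂ : D ⥤ X} (h : k₁ ⋙ π = k₂ ⋙ π) (hobj : ∀ d, k₁.obj d = k₂.obj d) : k₁ = k₂ :=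
  Functor.ext hobj fun _ _ u ↦ π.map_injective (by simpa [eqToHom_map] using Functor.congr_hom h u)

namespace IsDiscreteOpfibration

variable {X : Type u₁} {Y : Type u₂} [Category.{v₁} X] [Category.{v₂} Y] {π : X ⥤ Y}
  (hπ : IsDiscreteOpfibration π)
include hπ

noncomputable def lift {x : X} {y : Y} (g : π.obj x ⟶ y) : Σ x' : X, (x ⟶ x') :=
  (hπ g).exists.choose

lemma obj_lift {x : X} {y : Y} (g : π.obj x ⟶ y) : π.obj (hπ.lift g).1 = y :=
  (Sigma.mk.inj_iff.1 (hπ g).exists.choose_spec).1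

lemma map_lift_heq {x : X} {y : Y} (g : π.obj x ⟶ y) : π.map (hπ.lift g).2 ≍ g :=
  (Sigma.mk.inj_iff.1 (hπ g).exists.choose_spec).2

lemma lift_eq {x x' : X} {y : Y} (g : π.obj x ⟶ y) (p : x ⟶ x') (hobj : π.obj x' = y)
    (hmap : π.map p ≍ g) : hπ.lift g = ⟨x', p⟩ :=
  (hπ g).unique (hπ g).exists.choose_spec (Sigma.ext hobj hmap)

lemma map_lift_comp_eqToHom_heq {x x' : X} {y : Y} (g : π.obj x ⟶ y)
    (h : (hπ.lift g).1 = x') : π.map ((hπ.lift g).2 ≫ eqToHom h) ≍ g := by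
  subst h
  simpa using hπ.map_lift_heq g

lemma faithful : π.Faithful where
  map_injective {_ x'} p q hpq :=
    eq_of_heq (Sigma.mk.inj_iff.1 ((hπ (π.map q)).unique (y₁ := ⟨x', p⟩) (y₂ := ⟨x', q⟩)
      (by rw [hpq]) rfl)).2

noncomputable def fiberFunctor : Y ⥤ Type u₁ where
  obj y := {x : X // π.obj x = y}
  map g := ↾fun x ↦ ⟨(hπ.lift (eqToHom x.2 ≫ g)).1, hπ.obj_lift _⟩
  map_id y := by
    ext ⟨x, rfl⟩
    exact congrArg Sigma.fst (hπ.lift_eq (eqToHom rfl ≫ 𝟙 _) (𝟙 x) rfl (by simp))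
  map_comp {y y' y''} g g' := by
    ext ⟨x, hx⟩
    let p := hπ.lift (eqToHom hx ≫ g)
    let q := hπ.lift (eqToHom (hπ.obj_lift (eqToHom hx ≫ g)) ≫ g')
    refine congrArg Sigma.fst (hπ.lift_eq (eqToHom hx ≫ g ≫ g') (p.2 ≫ q.2) (hπ.obj_lift _) ?_)
    rw [π.map_comp, heq_eqToHom_comp_iff]
    exact heq_comp hx (hπ.obj_lift _) (hπ.obj_lift _)
      ((hπ.map_lift_heq _).trans (eqToHom_comp_heq _ _))
      ((hπ.map_lift_heq _).trans (eqToHom_comp_heq _ _))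

lemma fiberFunctor_map {x x' : X} {y y' : Y} (p : x ⟶ x') (g : y ⟶ y') (hx : π.obj x = y)
    (hx' : π.obj x' = y') (hp : π.map p ≍ g) : hπ.fiberFunctor.map g ⟨x, hx⟩ = ⟨x', hx'⟩ :=
  Subtype.ext (congrArg Sigma.fst (hπ.lift_eq _ p hx' (hp.trans (eqToHom_comp_heq _ _).symm)))

def sectionOf {E : Type u₃} [Category.{v₃} E] {k : E ⥤ X} {χ : E ⥤ Y} (hk : k ⋙ π = χ) :
    (χ ⋙ hπ.fiberFunctor).sections :=
  ⟨fun e ↦ ⟨k.obj e, Functor.congr_obj hk e⟩,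
    fun u ↦ hπ.fiberFunctor_map (k.map u) _ _ _ (Functor.hcongr_hom hk u)⟩

variable {C : Type u₃} {D : Type u₄} [Category.{v₃} C] [Category.{v₄} D]

noncomputable def liftOfSection {ψ : D ⥤ Y} (s : (ψ ⋙ hπ.fiberFunctor).sections) : D ⥤ X :=
  haveI := hπ.faithful
  Functor.Faithful.div ψ π (fun d ↦ (s.val d).1) (fun d ↦ (s.val d).2)
    (fun {d _} u ↦ (hπ.lift (eqToHom (s.val d).2 ≫ ψ.map u)).2 ≫
      eqToHom (congrArg Subtype.val (s.property u)))
    ((hπ.map_lift_comp_eqToHom_heq _ _).trans (eqToHom_comp_heq _ _))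

lemma liftOfSection_comp {ψ : D ⥤ Y} (s : (ψ ⋙ hπ.fiberFunctor).sections) :
    hπ.liftOfSection s ⋙ π = ψ :=
  Functor.hext (fun d ↦ (s.val d).2)
    fun _ _ _ ↦ (hπ.map_lift_comp_eqToHom_heq _ _).trans (eqToHom_comp_heq _ _)

noncomputable def liftsEquivSections (ψ : D ⥤ Y) :
    {h : D ⥤ X // h ⋙ π = ψ} ≃ (ψ ⋙ hπ.fiberFunctor).sections where
  toFun h := hπ.sectionOf h.2
  invFun s := ⟨hπ.liftOfSection s, hπ.liftOfSection_comp s⟩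
  left_inv h := by
    have := hπ.faithful
    exact Subtype.ext (Functor.ext_of_comp_faithful (π := π)
      (by rw [liftOfSection_comp, h.2]) fun _ ↦ rfl)
  right_inv _ := rfl

lemma comp_eq_iff_sectionsPrecomp_eq (f : C ⥤ D) {φ : C ⥤ X} {ψ : D ⥤ Y}
    (hsq : φ ⋙ π = f ⋙ ψ) {h : D ⥤ X} (hh : h ⋙ π = ψ) :
    f ⋙ h = φ ↔ f.sectionsPrecomp (hπ.sectionOf hh) = hπ.sectionOf hsq := by
  refine ⟨by rintro rfl; rfl, fun H ↦ ?_⟩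
  have := hπ.faithful
  refine Functor.ext_of_comp_faithful (π := π) (by rw [Functor.assoc, hh, hsq]) fun c ↦ ?_
  exact congrArg Subtype.val (congrFun (congrArg Subtype.val H) c)

theorem existsUnique_lift_of_initial (f : C ⥤ D) [f.Initial] (φ : C ⥤ X) (ψ : D ⥤ Y)
    (hsq : φ ⋙ π = f ⋙ ψ) : ∃! h : D ⥤ X, f ⋙ h = φ ∧ h ⋙ π = ψ := by
  have hbij := f.bijective_sectionsPrecomp (ψ ⋙ hπ.fiberFunctor)
  obtain ⟨s, hs⟩ := hbij.2 (hπ.sectionOf hsq)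
  let e := hπ.liftsEquivSections ψ
  refine ⟨(e.symm s).1,
    ⟨(hπ.comp_eq_iff_sectionsPrecomp_eq f hsq (e.symm s).2).2 hs, (e.symm s).2⟩, ?_⟩
  rintro h ⟨hφ, hψ⟩
  have : e ⟨h, hψ⟩ = s :=
    hbij.1 (((hπ.comp_eq_iff_sectionsPrecomp_eq f hsq hψ).1 hφ).trans hs.symm)
  exact congrArg Subtype.val (e.eq_symm_apply.2 this)

end IsDiscreteOpfibration

section

variable {C : Type u₁} {D : Type u₂} [Category.{v₁} C] [Category.{v₂} D]

namespace CategoryTheory.CategoryOfElements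

lemma isDiscreteOpfibration_π (P : D ⥤ Type w) :
    IsDiscreteOpfibration (CategoryOfElements.π P) := by
  intro x y g
  refine ⟨⟨⟨y, P.map g x.2⟩, ⟨g, rfl⟩⟩, rfl, ?_⟩
  rintro ⟨⟨y', a⟩, m⟩ h
  obtain ⟨hy, hm⟩ := Sigma.mk.inj_iff.1 h
  change y' = y at hy
  subst y'
  replace hm : m.val = g := eq_of_heq hm
  obtain rfl : a = P.map g x.2 := by rw [← hm]; exact m.2.symm
  exact Sigma.ext rfl (heq_of_eq (CategoryOfElements.ext _ _ _ hm))

def functorOfSection (f : C ⥤ D) {P : D ⥤ Type w} (t : (f ⋙ P).sections) :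
    C ⥤ P.Elements where
  obj c := ⟨f.obj c, t.val c⟩
  map u := ⟨f.map u, t.property u⟩

lemma map_eqToHom_snd_of_eq {P : D ⥤ Type w} {x : P.Elements} {d : D} {a : P.obj d}
    (hx : x = ⟨d, a⟩) (e : x.1 = d) : P.map (eqToHom e) x.2 = a := by
  subst hx
  simp

lemma map_map_eqToHom_snd {P : D ⥤ Type w} {x x' : P.Elements} (m : x ⟶ x') {d d' : D}
    (u : d ⟶ d') (e : x.1 = d) (e' : x'.1 = d') (hm : m.val ≍ u) :
    P.map u (P.map (eqToHom e) x.2) = P.map (eqToHom e') x'.2 := by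
  obtain ⟨d₀, a⟩ := x
  obtain ⟨d₀', a'⟩ := x'
  dsimp at e e'
  subst e e'
  obtain rfl := eq_of_heq hm
  simpa using m.2

def sectionOfFunctor {P : D ⥤ Type w} {h : D ⥤ P.Elements} (hh : h ⋙ π P = 𝟭 D) :
    P.sections :=
  ⟨fun d ↦ P.map (eqToHom (Functor.congr_obj hh d)) (h.obj d).2,
    fun u ↦ map_map_eqToHom_snd (h.map u) u _ _ (Functor.hcongr_hom hh u)⟩

end CategoryTheory.CategoryOfElements

open CategoryOfElements in
lemma surjective_sectionsPrecomp_of_exists_lift (f : C ⥤ D) (P : D ⥤ Type w)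
    (hlift : ∀ φ : C ⥤ P.Elements, φ ⋙ π P = f →
      ∃ h : D ⥤ P.Elements, f ⋙ h = φ ∧ h ⋙ π P = 𝟭 D) :
    Function.Surjective (f.sectionsPrecomp (P := P)) := by
  intro t
  obtain ⟨h, hφ, hh⟩ := hlift (functorOfSection f t) rfl
  exact ⟨sectionOfFunctor hh,
    Subtype.ext (funext fun c ↦ map_eqToHom_snd_of_eq (Functor.congr_obj hφ c) _)⟩

def costructuredArrowComponents (f : C ⥤ D) : D ⥤ Type (max u₁ v₂) where
  obj d := ConnectedComponents (CostructuredArrow f d)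
  map g := ↾(CostructuredArrow.map g).mapConnectedComponents
  map_id d := by
    ext x
    induction x using Quotient.inductionOn
    exact congrArg (Quotient.mk _) CostructuredArrow.map_id
  map_comp g g' := by
    ext x
    induction x using Quotient.inductionOn
    exact congrArg (Quotient.mk _) CostructuredArrow.map_comp

theorem initial_of_surjective_sectionsPrecomp (f : C ⥤ D)
    (hf : Function.Surjective (f.sectionsPrecomp (P := costructuredArrowComponents f))) :
    f.Initial := by
  let t : (f ⋙ costructuredArrowComponents f).sections :=
    ⟨fun c ↦ Quotient.mk _ (CostructuredArrow.mk (𝟙 (f.obj c))),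
      fun u ↦ Quotient.sound (Zigzag.of_hom (CostructuredArrow.homMk u (by simp)))⟩
  obtain ⟨s, hs⟩ := hf t
  have hcomponent : ∀ {d} (e : CostructuredArrow f d), s.val d = Quotient.mk _ e := by
    intro d e
    refine (s.property e.hom).symm.trans
      ((congrArg _ (congr_fun (congrArg Subtype.val hs) e.left)).trans ?_)
    exact Quotient.sound (Zigzag.of_hom (CostructuredArrow.homMk (𝟙 e.left) (by simp)))
  refine ⟨fun d ↦ ?_⟩
  obtain ⟨e, -⟩ := Quotient.exists_rep (s.val d)
  have : Nonempty (CostructuredArrow f d) := ⟨e⟩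
  exact zigzag_isConnected fun e₁ e₂ ↦
    Quotient.exact ((hcomponent e₁).symm.trans (hcomponent e₂))

end

/-- A functor `f : C ⥤ D` between small categories is initial if and only if it is
uniquely left orthogonal to every discrete opfibration `π : X ⥤ Y`: every strictly
commuting square `φ ⋙ π = f ⋙ ψ` admits a unique diagonal filler `h : D ⥤ X` with
`f ⋙ h = φ` and `h ⋙ π = ψ`. -/
theorem initial_iff_unique_lifting_against_discrete_opfibrations
    {C D : Type u} [SmallCategory C] [SmallCategory D] (f : C ⥤ D) :
    f.Initial ↔
      ∀ {X Y : Type u} [SmallCategory X] [SmallCategory Y] (π : X ⥤ Y),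
        IsDiscreteOpfibration π →
        ∀ (φ : C ⥤ X) (ψ : D ⥤ Y), φ ⋙ π = f ⋙ ψ →
          ∃! h : D ⥤ X, f ⋙ h = φ ∧ h ⋙ π = ψ := by
  refine ⟨fun _ _ _ _ _ π hπ φ ψ hsq ↦ hπ.existsUnique_lift_of_initial f φ ψ hsq,
    fun hlift ↦ initial_of_surjective_sectionsPrecomp f ?_⟩
  refine surjective_sectionsPrecomp_of_exists_lift f _ fun φ hφ ↦ ?_
  exact (hlift _ (CategoryOfElements.isDiscreteOpfibration_π _) φ (𝟭 D) hφ).exists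
end

section
/- Every functor u : A ⥤ B between small categories admits a comprehensive factorization: there exist a small category X, an initial functor j : A ⥤ X, and a discrete opfibration p : X ⥤ B with u = j ⋙ p. -/
/-!
Take `X` to be the category of elements of `b ↦ π₀(u ↓ b)`, the set of connected components of
`CostructuredArrow u b`, and `p` its projection; projections from categories of elements are
discrete opfibrations. Let `j a` be the component of `(a, 𝟙 (u a))`. An object of `j ↓ (b, x)` is
an arrow `f : u a ⟶ b` lying in the component `x`, so `j ↓ (b, x)` is the image of the component
`x` of `u ↓ b`, a connected category, under a functor surjective on objects; hence it is connected.
-/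

open CategoryTheory

universe u

universe w v₁ v₂ u₁ u₂

namespace CategoryTheory

theorem CategoryOfElements.isDiscreteOpfibration_π_s13 {C : Type u₁} [Category.{v₁} C]
    (F : C ⥤ Type w) : IsDiscreteOpfibration (CategoryOfElements.π F) := by
  rintro ⟨c, s⟩ c' g
  refine ⟨⟨⟨c', F.map g s⟩, ⟨g, rfl⟩⟩, rfl, ?_⟩
  rintro ⟨⟨c'', s'⟩, f⟩ h
  obtain ⟨hc, hf⟩ := Sigma.mk.inj_iff.mp h
  obtain rfl : c' = c'' := hc.symm
  replace hf : f.val = g := eq_of_heq hf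
  obtain rfl : F.map g s = s' := hf ▸ CategoryOfElements.map_snd f
  exact Sigma.ext rfl (heq_of_eq (CategoryOfElements.ext F _ _ hf))

theorem isConnected_of_surjective_obj {J : Type u₁} [Category.{v₁} J]
    {K : Type u₂} [Category.{v₂} K] [IsConnected J] (F : J ⥤ K) (hF : Function.Surjective F.obj) :
    IsConnected K :=
  have : Nonempty K := Nonempty.map F.obj inferInstance
  zigzag_isConnected fun k₁ k₂ => by
    obtain ⟨j₁, rfl⟩ := hF k₁
    obtain ⟨j₂, rfl⟩ := hF k₂
    exact zigzag_obj_of_zigzag F (isPreconnected_zigzag j₁ j₂)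

namespace CostructuredArrow

variable {A : Type u₁} [Category.{v₁} A] {B : Type u₂} [Category.{v₂} B]

/-- `functor u ⋙ Cat.connectedComponents`, with its objects spelled out as
`ConnectedComponents (CostructuredArrow u b)` so that instances about those apply. -/
abbrev componentsFunctor_s13 (u : A ⥤ B) : B ⥤ Type (max u₁ v₂) :=
  { functor u ⋙ Cat.connectedComponents with obj b := ConnectedComponents (CostructuredArrow u b) }

theorem componentsFunctor_map_mk_id {u : A ⥤ B} {a : A} {b : B} (f : u.obj a ⟶ b) :
    (componentsFunctor_s13 u).map f (ConnectedComponents.mk (mk (𝟙 (u.obj a)))) =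
      ConnectedComponents.mk (mk f) :=
  congrArg ConnectedComponents.mk ((map_mk f).trans (by rw [Category.id_comp]))

def toElementsComponentsFunctor (u : A ⥤ B) : A ⥤ (componentsFunctor_s13 u).Elements where
  obj a := ⟨u.obj a, .mk (mk (𝟙 (u.obj a)))⟩
  map f := ⟨u.map f, _root_.Quotient.sound (Zigzag.of_hom (homMk f (by dsimp [functor]; simp)))⟩

variable (u : A ⥤ B) (d : (componentsFunctor_s13 u).Elements)

def componentToCostructuredArrow :
    d.2.Component ⥤ CostructuredArrow (toElementsComponentsFunctor u) d where
  obj Z := mk (Y := Z.obj.left)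
    ⟨Z.obj.hom, (componentsFunctor_map_mk_id _).trans (eq_mk Z.obj ▸ Z.2)⟩
  map g := homMk g.hom.left (Subtype.ext (w g.hom))

theorem componentToCostructuredArrow_obj_surjective :
    Function.Surjective (componentToCostructuredArrow u d).obj := fun Y =>
  ⟨⟨mk Y.hom.val, (componentsFunctor_map_mk_id _).symm.trans Y.hom.2⟩, (eq_mk Y).symm⟩

instance initial_toElementsComponentsFunctor : (toElementsComponentsFunctor u).Initial where
  out d := isConnected_of_surjective_obj _ (componentToCostructuredArrow_obj_surjective u d)

end CostructuredArrow

end CategoryTheory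

/-- **Comprehensive factorization.** Every functor `u : A ⥤ B` between small categories
factors as an initial functor `j : A ⥤ X` followed by a discrete opfibration
`p : X ⥤ B`. -/
theorem comprehensive_factorization {A B : Type u} [SmallCategory A] [SmallCategory B]
    (u : A ⥤ B) :
    ∃ (X : Cat.{u, u}) (j : A ⥤ X) (p : X ⥤ B),
      j.Initial ∧ IsDiscreteOpfibration p ∧ u = j ⋙ p :=
  ⟨Cat.of (CostructuredArrow.componentsFunctor_s13 u).Elements,
    CostructuredArrow.toElementsComponentsFunctor u, CategoryOfElements.π _,
    CostructuredArrow.initial_toElementsComponentsFunctor u,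
    CategoryOfElements.isDiscreteOpfibration_π_s13 _, rfl⟩
end
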